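/- arXiv:2602.13451 — 4 statements merged into one kernel-verified Lean document; each statement's English description precedes it below -/
import Mathlib

section
/- Personalized-game equilibrium guarantee (core inequality of Theorem 3.1): Fix a user i₀ ∈ N, real numbers ε_U ≥ 0, ε_P ≥ 0, B ∈ ℝ, and (ε_U, ε_P)-Weak Market Alignment data (F_{j,i}, λ_{j,i}, c_j, w_{j,i}, c_i). Let μ and ν be probability distributions on (∏_{i∈N} A_i) × Y such that: (1) for every provider j ∈ T, E_ν[u^P_j(a,y)] ≤ E_μ[u^P_j(a,y)] (no provider profits from the deviation); (2) for every provider j ∈ T and every user i ≠ i₀, E_ν[F_{j,i}(a_i,y)] = E_μ[F_{j,i}(a_i,y)] (the deviation changes only user i₀'s induced distribution); and (3) E_ν[u_{i₀}(a_{i₀},y)] ≥ B (the deviation gives user i₀ expected utility at least B). Then E_μ[u_{i₀}(a_{i₀},y)] ≥ B − 2ε_U − 2ε_P·μ_{i₀}, where μ_{i₀} = ∑_{j∈T : w_{j,i₀}>0} w_{j,i₀}/λ_{j,i₀}. -/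
open scoped Classical

/-- Expectation of `f` under a distribution `p` on a finite type. -/
noncomputable def Ex {X : Type*} [Fintype X] (p : X → ℝ) (f : X → ℝ) : ℝ :=
  ∑ x, p x * f x

/-!
Write `D j` for the change, from `μ` to `ν`, of the expected value of `F j i₀`. Up to `2 ε_P`, the
change of provider `j`'s payoff is `∑ i, λ j i * (change of E F j i)`, which by (2) is
`λ j i₀ * D j`; by (1) it is nonpositive, so `λ j i₀ * D j ≤ 2 ε_P`. Up to `2 ε_U`, the change of
user `i₀`'s utility is `∑ j, w j i₀ * D j`, and each term with `w j i₀ > 0` is at most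
`2 ε_P * w j i₀ / λ j i₀`. Combined with (3) this gives the bound.
-/

section Expectation

variable {X : Type*} [Fintype X]

theorem Ex_sub (p f g : X → ℝ) : Ex p (fun x => f x - g x) = Ex p f - Ex p g := by
  simp only [Ex, mul_sub, Finset.sum_sub_distrib]

theorem Ex_sum_mul_add {I : Type*} [Fintype I] {p : X → ℝ} (hp1 : ∑ x, p x = 1)
    (co : I → ℝ) (g : I → X → ℝ) (d : ℝ) :
    Ex p (fun x => ∑ i, co i * g i x + d) = ∑ i, co i * Ex p (g i) + d := by
  simp only [Ex, mul_add, Finset.sum_add_distrib, ← Finset.sum_mul, hp1, one_mul,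
    Finset.mul_sum]
  rw [Finset.sum_comm]
  congr 1
  refine Finset.sum_congr rfl fun i _ => Finset.sum_congr rfl fun x _ => ?_
  ring

theorem abs_Ex_le {p f : X → ℝ} {ε : ℝ} (hp0 : ∀ x, 0 ≤ p x) (hp1 : ∑ x, p x = 1)
    (hf : ∀ x, |f x| ≤ ε) : |Ex p f| ≤ ε :=
  calc |Ex p f| ≤ ∑ x, |p x * f x| := Finset.abs_sum_le_sum_abs _ _
    _ ≤ ∑ x, p x * ε := Finset.sum_le_sum fun x _ => by
        rw [abs_mul, abs_of_nonneg (hp0 x)]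
        exact mul_le_mul_of_nonneg_left (hf x) (hp0 x)
    _ = ε := by rw [← Finset.sum_mul, hp1, one_mul]

variable {μ ν : X → ℝ}

theorem Ex_sub_Ex_le_of_abs_sub_le (hμ0 : ∀ x, 0 ≤ μ x) (hμ1 : ∑ x, μ x = 1)
    (hν0 : ∀ x, 0 ≤ ν x) (hν1 : ∑ x, ν x = 1) {f g : X → ℝ} {ε : ℝ}
    (h : ∀ x, |f x - g x| ≤ ε) :
    Ex ν f - Ex μ f ≤ Ex ν g - Ex μ g + 2 * ε := by
  have hμ := abs_Ex_le hμ0 hμ1 h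
  have hν := abs_Ex_le hν0 hν1 h
  rw [Ex_sub, abs_le] at hμ hν
  linarith [hμ.1, hν.2]

theorem Ex_sum_mul_add_sub (hμ1 : ∑ x, μ x = 1) (hν1 : ∑ x, ν x = 1) {I : Type*} [Fintype I]
    (co : I → ℝ) (g : I → X → ℝ) (d : ℝ) :
    Ex ν (fun x => ∑ i, co i * g i x + d) - Ex μ (fun x => ∑ i, co i * g i x + d) =
      ∑ i, co i * (Ex ν (g i) - Ex μ (g i)) := by
  rw [Ex_sum_mul_add hν1, Ex_sum_mul_add hμ1, add_sub_add_right_eq_sub,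
    ← Finset.sum_sub_distrib]
  simp only [mul_sub]

end Expectation

theorem sum_mul_le_mul_sum_div {T : Type*} [Fintype T] {w lam D : T → ℝ} {K : ℝ}
    (hw : ∀ j, 0 ≤ w j) (hlam : ∀ j, 0 < w j → 0 < lam j) (hD : ∀ j, lam j * D j ≤ K) :
    ∑ j, w j * D j ≤ K * ∑ j ∈ Finset.univ.filter (fun j => 0 < w j), w j / lam j := by
  rw [← Finset.sum_filter_of_ne (p := fun j => 0 < w j)
    fun j _ hne => (hw j).lt_of_ne' (left_ne_zero_of_mul hne), Finset.mul_sum]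
  refine Finset.sum_le_sum fun j hj => ?_
  have hwj : 0 < w j := (Finset.mem_filter.1 hj).2
  have hlamj := hlam j hwj
  calc w j * D j = w j / lam j * (lam j * D j) := by field_simp
    _ ≤ w j / lam j * K := mul_le_mul_of_nonneg_left (hD j) (by positivity)
    _ = K * (w j / lam j) := mul_comm _ _

theorem personalized_equilibrium_guarantee_general
    {N T Y : Type*} [Fintype N] [Fintype T] [Fintype Y]
    {A : N → Type*} [∀ i, Fintype (A i)]
    (u : ∀ i : N, A i → Y → ℝ) (uP : T → (∀ i, A i) → Y → ℝ)
    (i₀ : N) (εU εP B : ℝ)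
    -- Weak Market Alignment data
    (F : T → ∀ i : N, A i → Y → ℝ)
    (lam : T → N → ℝ) (c : T → ℝ) (w : T → N → ℝ) (cU : N → ℝ)
    (hw : ∀ j i, 0 ≤ w j i)
    (hP : ∀ j (a : ∀ i, A i) (y : Y),
      |uP j a y - (∑ i, lam j i * F j i (a i) y + c j)| ≤ εP)
    (hU : ∀ i (a : A i) (y : Y),
      |u i a y - (∑ j, w j i * F j i a y + cU i)| ≤ εU)
    (himp : ∀ j i, 0 < w j i → 0 < lam j i)
    -- the two distributions
    (μ ν : (∀ i, A i) × Y → ℝ)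
    (hμ0 : ∀ x, 0 ≤ μ x) (hμ1 : ∑ x, μ x = 1)
    (hν0 : ∀ x, 0 ≤ ν x) (hν1 : ∑ x, ν x = 1)
    -- (1) no provider profits from the deviation
    (h1 : ∀ j, Ex ν (fun x => uP j x.1 x.2) ≤ Ex μ (fun x => uP j x.1 x.2))
    -- (2) the deviation changes only user i₀'s induced distribution
    (h2 : ∀ j, ∀ i, i ≠ i₀ →
      Ex ν (fun x => F j i (x.1 i) x.2) = Ex μ (fun x => F j i (x.1 i) x.2))
    -- (3) the deviation gives user i₀ expected utility at least B
    (h3 : B ≤ Ex ν (fun x => u i₀ (x.1 i₀) x.2)) :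
    Ex μ (fun x => u i₀ (x.1 i₀) x.2) ≥
      B - 2 * εU - 2 * εP *
        ∑ j ∈ Finset.univ.filter (fun j : T => 0 < w j i₀), w j i₀ / lam j i₀ := by
  set D : T → ℝ := fun j =>
    Ex ν (fun x => F j i₀ (x.1 i₀) x.2) - Ex μ (fun x => F j i₀ (x.1 i₀) x.2)
  have provider_bound : ∀ j, lam j i₀ * D j ≤ 2 * εP := by
    intro j
    have hgap := Ex_sub_Ex_le_of_abs_sub_le hμ0 hμ1 hν0 hν1
      fun x => (abs_sub_comm _ _).trans_le (hP j x.1 x.2)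
    rw [Ex_sum_mul_add_sub hμ1 hν1, Fintype.sum_eq_single i₀
      fun i hi => by rw [h2 j i hi, sub_self, mul_zero]] at hgap
    linarith [h1 j]
  have user_gap := Ex_sub_Ex_le_of_abs_sub_le hμ0 hμ1 hν0 hν1 fun x => hU i₀ (x.1 i₀) x.2
  rw [Ex_sum_mul_add_sub hμ1 hν1] at user_gap
  linarith [sum_mul_le_mul_sum_div (hw · i₀) (himp · i₀) provider_bound]

/-- Personalized-game equilibrium guarantee (core inequality of Theorem 3.1): given
`(ε_U, ε_P)`-Weak Market Alignment data, if `μ` (the equilibrium distribution) and `ν`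
(the distribution induced by a deviation) satisfy (1) no provider profits from the
deviation, (2) the deviation changes only user `i₀`'s induced distribution, and (3) the
deviation gives user `i₀` expected utility at least `B`, then under `μ` user `i₀`'s
expected utility is at least `B − 2ε_U − 2ε_P·μ_{i₀}` where
`μ_{i₀} = ∑_{j : w_{j,i₀} > 0} w_{j,i₀}/λ_{j,i₀}`. -/
theorem personalized_equilibrium_guarantee
    {N T Y : Type*} [Fintype N] [Nonempty N] [Fintype T] [Nonempty T]
    [Fintype Y] [Nonempty Y]
    {A : N → Type*} [∀ i, Fintype (A i)] [∀ i, Nonempty (A i)]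
    (u : ∀ i : N, A i → Y → ℝ) (uP : T → (∀ i, A i) → Y → ℝ)
    (hu : ∀ i (a : A i) (y : Y), u i a y ∈ Set.Icc (0 : ℝ) 1)
    (huP : ∀ j (a : ∀ i, A i) (y : Y), uP j a y ∈ Set.Icc (0 : ℝ) 1)
    (i₀ : N) (εU εP B : ℝ) (hεU : 0 ≤ εU) (hεP : 0 ≤ εP)
    -- Weak Market Alignment data
    (F : T → ∀ i : N, A i → Y → ℝ)
    (lam : T → N → ℝ) (c : T → ℝ) (w : T → N → ℝ) (cU : N → ℝ)
    (hF : ∀ j i (a : A i) (y : Y), 0 ≤ F j i a y)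
    (hlam : ∀ j i, 0 ≤ lam j i)
    (hw : ∀ j i, 0 ≤ w j i)
    (hP : ∀ j (a : ∀ i, A i) (y : Y),
      |uP j a y - (∑ i, lam j i * F j i (a i) y + c j)| ≤ εP)
    (hU : ∀ i (a : A i) (y : Y),
      |u i a y - (∑ j, w j i * F j i a y + cU i)| ≤ εU)
    (hcov : ∀ i, ∃ j, 0 < lam j i ∧ 0 < w j i)
    (himp : ∀ j i, 0 < w j i → 0 < lam j i)
    -- the two distributions
    (μ ν : (∀ i, A i) × Y → ℝ)
    (hμ0 : ∀ x, 0 ≤ μ x) (hμ1 : ∑ x, μ x = 1)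
    (hν0 : ∀ x, 0 ≤ ν x) (hν1 : ∑ x, ν x = 1)
    -- (1) no provider profits from the deviation
    (h1 : ∀ j, Ex ν (fun x => uP j x.1 x.2) ≤ Ex μ (fun x => uP j x.1 x.2))
    -- (2) the deviation changes only user i₀'s induced distribution
    (h2 : ∀ j, ∀ i, i ≠ i₀ →
      Ex ν (fun x => F j i (x.1 i) x.2) = Ex μ (fun x => F j i (x.1 i) x.2))
    -- (3) the deviation gives user i₀ expected utility at least B
    (h3 : B ≤ Ex ν (fun x => u i₀ (x.1 i₀) x.2)) :
    Ex μ (fun x => u i₀ (x.1 i₀) x.2) ≥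
      B - 2 * εU - 2 * εP *
        ∑ j ∈ Finset.univ.filter (fun j : T => 0 < w j i₀), w j i₀ / lam j i₀ :=
  personalized_equilibrium_guarantee_general u uP i₀ εU εP B F lam c w cU hw hP hU himp μ ν hμ0 hμ1
    hν0 hν1 h1 h2 h3
end

section
/- Strong-alignment deviation lemma with slack on other users (core inequality of Theorem 4.4): Fix a provider j ∈ T, a user i* ∈ N, ε ≥ 0, and Δ ≥ 0. Suppose there exist nonnegative weights λ_{j,i} ≥ 0 and a constant c_j ∈ ℝ such that |u^P_j(a,y) − (∑_{i∈N} λ_{j,i} u_i(a_i,y) + c_j)| ≤ ε for every action profile a and state y, and that λ_{j,i*} > 0. Define δ = Δ·(∑_{i≠i*} λ_{j,i})/λ_{j,i*} + 2ε/λ_{j,i*}. Let μ and ν be probability distributions on (∏_{i∈N} A_i) × Y such that E_ν[u_{i*}(a_{i*},y)] > E_μ[u_{i*}(a_{i*},y)] + δ, and E_ν[u_i(a_i,y)] ≥ E_μ[u_i(a_i,y)] − Δ for every user i ≠ i*. Then E_ν[u^P_j(a,y)] > E_μ[u^P_j(a,y)]. -/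
open scoped Classical

/-- Strong-alignment deviation lemma with slack on other users (core inequality of
Theorem 4.4): if provider `j`'s utility is `ε`-approximately `∑_i λ_{j,i} u_i + c_j`
with `λ_{j,i} ≥ 0` and `λ_{j,i*} > 0`, and under the deviation distribution `ν` user
`i*`'s expected utility increases by more than
`δ = Δ·(∑_{i ≠ i*} λ_{j,i})/λ_{j,i*} + 2ε/λ_{j,i*}` while every other user's expected
utility decreases by at most `Δ`, then provider `j` strictly profits. -/
theorem strong_alignment_deviation_with_slack
    {N T Y : Type*} [Fintype N] [Nonempty N] [Fintype T] [Nonempty T]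
    [Fintype Y] [Nonempty Y]
    {A : N → Type*} [∀ i, Fintype (A i)] [∀ i, Nonempty (A i)]
    (u : ∀ i : N, A i → Y → ℝ) (uP : T → (∀ i, A i) → Y → ℝ)
    (hu : ∀ i (a : A i) (y : Y), u i a y ∈ Set.Icc (0 : ℝ) 1)
    (huP : ∀ j (a : ∀ i, A i) (y : Y), uP j a y ∈ Set.Icc (0 : ℝ) 1)
    (j : T) (iStar : N) (ε Δ : ℝ) (hε : 0 ≤ ε) (hΔ : 0 ≤ Δ)
    (lam : N → ℝ) (c : ℝ)
    (hlam : ∀ i, 0 ≤ lam i)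
    (happrox : ∀ (a : ∀ i, A i) (y : Y),
      |uP j a y - (∑ i, lam i * u i (a i) y + c)| ≤ ε)
    (hlam0 : 0 < lam iStar)
    (μ ν : (∀ i, A i) × Y → ℝ)
    (hμ0 : ∀ x, 0 ≤ μ x) (hμ1 : ∑ x, μ x = 1)
    (hν0 : ∀ x, 0 ≤ ν x) (hν1 : ∑ x, ν x = 1)
    (hstrict : Ex μ (fun x => u iStar (x.1 iStar) x.2) +
        (Δ * (∑ i ∈ Finset.univ.filter (fun i : N => i ≠ iStar), lam i) / lam iStar +
          2 * ε / lam iStar) <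
      Ex ν (fun x => u iStar (x.1 iStar) x.2))
    (hothers : ∀ i, i ≠ iStar →
      Ex μ (fun x => u i (x.1 i) x.2) - Δ ≤ Ex ν (fun x => u i (x.1 i) x.2)) :
    Ex μ (fun x => uP j x.1 x.2) < Ex ν (fun x => uP j x.1 x.2) := by
  classical
  set f : (∀ i, A i) × Y → ℝ := fun x => ∑ i, lam i * u i (x.1 i) x.2 + c with hf
  -- Expectation of f decomposes
  have key : ∀ p : (∀ i, A i) × Y → ℝ, (∑ x, p x = 1) →
      Ex p f = ∑ i, lam i * Ex p (fun x => u i (x.1 i) x.2) + c := by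
    intro p hp
    have : Ex p f = (∑ x, ∑ i, lam i * (p x * u i (x.1 i) x.2)) + (∑ x, p x) * c := by
      simp only [Ex, hf, mul_add, Finset.mul_sum, Finset.sum_add_distrib,
        ← Finset.sum_mul]
      congr 1
      refine Finset.sum_congr rfl fun x _ => Finset.sum_congr rfl fun i _ => by ring
    rw [this, hp, one_mul, Finset.sum_comm]
    congr 1
    exact Finset.sum_congr rfl fun i _ => by rw [Ex, Finset.mul_sum]
  -- |Ex p uP - Ex p f| ≤ ε for nonneg p summing to 1
  have approx : ∀ p : (∀ i, A i) × Y → ℝ, (∀ x, 0 ≤ p x) → (∑ x, p x = 1) →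
      |Ex p (fun x => uP j x.1 x.2) - Ex p f| ≤ ε := by
    intro p hp0 hp1
    have : Ex p (fun x => uP j x.1 x.2) - Ex p f
        = ∑ x, p x * (uP j x.1 x.2 - f x) := by
      simp [Ex, mul_sub, Finset.sum_sub_distrib]
    rw [this]
    calc |∑ x, p x * (uP j x.1 x.2 - f x)| ≤ ∑ x, |p x * (uP j x.1 x.2 - f x)| :=
          Finset.abs_sum_le_sum_abs _ _
      _ ≤ ∑ x : (∀ i, A i) × Y, p x * ε := by
          refine Finset.sum_le_sum fun x _ => ?_
          rw [abs_mul, abs_of_nonneg (hp0 x)]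
          exact mul_le_mul_of_nonneg_left (happrox x.1 x.2) (hp0 x)
      _ = ε := by rw [← Finset.sum_mul, hp1, one_mul]
  set D : N → ℝ := fun i =>
    Ex ν (fun x => u i (x.1 i) x.2) - Ex μ (fun x => u i (x.1 i) x.2) with hD
  set s : Finset N := Finset.univ.filter (fun i : N => i ≠ iStar) with hs
  have hsplit : ∑ i, lam i * D i = lam iStar * D iStar + ∑ i ∈ s, lam i * D i := by
    have : (Finset.univ : Finset N) = insert iStar s := by
      ext i; by_cases h : i = iStar <;> simp [hs, h]
    rw [this, Finset.sum_insert (by simp [hs])]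
  have hbig : 2 * ε < ∑ i, lam i * D i := by
    rw [hsplit]
    have h1 : Δ * (∑ i ∈ s, lam i) + 2 * ε < lam iStar * D iStar := by
      have := hstrict
      have h2 : Δ * (∑ i ∈ s, lam i) / lam iStar + 2 * ε / lam iStar < D iStar := by
        simpa [hD] using sub_lt_sub_right this (Ex μ (fun x => u iStar (x.1 iStar) x.2)) |>.trans_eq (by ring_nf) |>.trans_le (le_of_eq rfl)
      calc Δ * (∑ i ∈ s, lam i) + 2 * ε
          = lam iStar * (Δ * (∑ i ∈ s, lam i) / lam iStar + 2 * ε / lam iStar) := by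
            field_simp
        _ < lam iStar * D iStar := by
            exact mul_lt_mul_of_pos_left h2 hlam0
    have h3 : -(Δ * (∑ i ∈ s, lam i)) ≤ ∑ i ∈ s, lam i * D i := by
      have : ∑ i ∈ s, lam i * (-Δ) ≤ ∑ i ∈ s, lam i * D i := by
        refine Finset.sum_le_sum fun i hi => ?_
        have hiS : i ≠ iStar := by simpa [hs] using hi
        have := hothers i hiS
        have : -Δ ≤ D i := by simp [hD]; linarith
        exact mul_le_mul_of_nonneg_left this (hlam i)
      calc -(Δ * (∑ i ∈ s, lam i)) = ∑ i ∈ s, lam i * (-Δ) := by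
            rw [← Finset.sum_mul]; ring
        _ ≤ _ := this
    linarith
  have hμa := approx μ hμ0 hμ1
  have hνa := approx ν hν0 hν1
  have hEf : Ex ν f - Ex μ f = ∑ i, lam i * D i := by
    rw [key μ hμ1, key ν hν1]
    simp only [hD, mul_sub]
    rw [Finset.sum_sub_distrib]
    ring
  have h4 : |Ex μ (fun x => uP j x.1 x.2) - Ex μ f| ≤ ε := hμa
  have h5 : |Ex ν (fun x => uP j x.1 x.2) - Ex ν f| ≤ ε := hνa
  rw [abs_le] at h4 h5
  linarith [h4.1, h4.2, h5.1, h5.2, hbig, hEf]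
end

section
/- The anonymous-game counterexample exactly satisfies Weak Market Alignment (part of Theorem 4.1): Let Y be a finite nonempty state type, A = Y ∪ {⊥}, D > 1, and 0 < ε < c ≤ 1. Define provider utilities u^P_1(a₁,a₂,y) = (1/(D+1))·1[a₁ = y] + (D/(D+1))·1[a₂ = ⊥] and u^P_2(a₁,a₂,y) = (D/(D+1))·1[a₁ = ⊥] + (1/(D+1))·1[a₂ = y], and user utilities u_1(a₁,y) = c·1[a₁ = y] + ε·1[a₁ = ⊥] and u_2(a₂,y) = c·1[a₂ = y] + ε·1[a₂ = ⊥]. Then all four utility functions take values in [0,1], and there exist (0,0)-Weak Market Alignment data witnessing exact Weak Market Alignment: namely F_{1,1}(a₁,y) = 1[a₁ = y], F_{1,2}(a₂,y) = 1[a₂ = ⊥], F_{2,1}(a₁,y) = 1[a₁ = ⊥], F_{2,2}(a₂,y) = 1[a₂ = y], with provider weights λ_{1,1} = λ_{2,2} = 1/(D+1), λ_{1,2} = λ_{2,1} = D/(D+1), constants c_j = 0, user weights w_{1,1} = w_{2,2} = c, w_{2,1} = w_{1,2} = ε, and constants c_i = 0; both the provider separability and user alignment conditions hold with error 0, for every user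 i there is a provider j with λ_{j,i} > 0 and w_{j,i} > 0, and w_{j,i} > 0 implies λ_{j,i} > 0. -/
open scoped Classical

/-- The basis functions of the anonymous-game counterexample:
`F_{1,1}(a,y) = 1[a = y]`, `F_{2,2}(a,y) = 1[a = y]`,
`F_{1,2}(a,y) = 1[a = ⊥]`, `F_{2,1}(a,y) = 1[a = ⊥]` (actions in `Option Y`,
with `⊥ = none`). -/
noncomputable def F10 {Y : Type*} (j i : Fin 2) (a : Option Y) (y : Y) : ℝ :=
  if j = i then (if a = some y then 1 else 0) else (if a = none then 1 else 0)

/-- Provider weights: `λ_{1,1} = λ_{2,2} = 1/(D+1)`, `λ_{1,2} = λ_{2,1} = D/(D+1)`. -/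
noncomputable def lam10 (D : ℝ) (j i : Fin 2) : ℝ :=
  if j = i then 1 / (D + 1) else D / (D + 1)

/-- User weights: `w_{1,1} = w_{2,2} = c`, `w_{1,2} = w_{2,1} = ε`. -/
noncomputable def w10 (ε c : ℝ) (j i : Fin 2) : ℝ :=
  if j = i then c else ε

/-- Provider utilities of the counterexample:
`u^P_1(a₁,a₂,y) = (1/(D+1))·1[a₁=y] + (D/(D+1))·1[a₂=⊥]`,
`u^P_2(a₁,a₂,y) = (D/(D+1))·1[a₁=⊥] + (1/(D+1))·1[a₂=y]`. -/
noncomputable def uP10 {Y : Type*} (D : ℝ) (j : Fin 2) (a : Fin 2 → Option Y) (y : Y) : ℝ :=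
  if j = 0 then
    (1 / (D + 1)) * (if a 0 = some y then 1 else 0) +
      (D / (D + 1)) * (if a 1 = none then 1 else 0)
  else
    (D / (D + 1)) * (if a 0 = none then 1 else 0) +
      (1 / (D + 1)) * (if a 1 = some y then 1 else 0)

/-- User utilities of the counterexample: `u_i(a,y) = c·1[a=y] + ε·1[a=⊥]`. -/
noncomputable def uU10 {Y : Type*} (ε c : ℝ) (_i : Fin 2) (a : Option Y) (y : Y) : ℝ :=
  c * (if a = some y then 1 else 0) + ε * (if a = none then 1 else 0)

/-- The anonymous-game counterexample exactly satisfies Weak Market Alignment (part of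
Theorem 4.1): all four utilities take values in `[0,1]`, and the data
`(F10, lam10 D, c_j = 0, w10 ε c, c_i = 0)` witness exact `(0,0)`-Weak Market
Alignment, including the coverage and implication conditions. -/
theorem counterexample_weak_alignment
    {Y : Type*} [Fintype Y] [Nonempty Y]
    (D ε c : ℝ) (hD : 1 < D) (hε : 0 < ε) (hεc : ε < c) (hc : c ≤ 1) :
    -- provider utilities take values in [0,1]
    (∀ (j : Fin 2) (a : Fin 2 → Option Y) (y : Y), uP10 D j a y ∈ Set.Icc (0 : ℝ) 1) ∧
    -- user utilities take values in [0,1]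
    (∀ (i : Fin 2) (a : Option Y) (y : Y), uU10 ε c i a y ∈ Set.Icc (0 : ℝ) 1) ∧
    -- the F's are nonnegative
    (∀ (j i : Fin 2) (a : Option Y) (y : Y), 0 ≤ F10 j i a y) ∧
    -- the λ's and w's are nonnegative
    (∀ (j i : Fin 2), 0 ≤ lam10 D j i) ∧
    (∀ (j i : Fin 2), 0 ≤ w10 ε c j i) ∧
    -- provider separability holds with error 0 (constants c_j = 0)
    (∀ (j : Fin 2) (a : Fin 2 → Option Y) (y : Y),
      |uP10 D j a y - (∑ i, lam10 D j i * F10 j i (a i) y + 0)| ≤ 0) ∧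
    -- user alignment holds with error 0 (constants c_i = 0)
    (∀ (i : Fin 2) (a : Option Y) (y : Y),
      |uU10 ε c i a y - (∑ j, w10 ε c j i * F10 j i a y + 0)| ≤ 0) ∧
    -- coverage: for every user some provider has λ > 0 and w > 0
    (∀ i : Fin 2, ∃ j : Fin 2, 0 < lam10 D j i ∧ 0 < w10 ε c j i) ∧
    -- w_{j,i} > 0 implies λ_{j,i} > 0
    (∀ (j i : Fin 2), 0 < w10 ε c j i → 0 < lam10 D j i) := by
  have hD1 : (0:ℝ) < D + 1 := by linarith
  have h1 : (0:ℝ) ≤ 1 / (D + 1) := by positivity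
  have h2 : (0:ℝ) ≤ D / (D + 1) := by positivity
  have hsum : 1 / (D + 1) + D / (D + 1) = 1 := by field_simp; ring
  refine ⟨?_, ?_, ?_, ?_, ?_, ?_, ?_, ?_, ?_⟩
  · intro j a y
    have e0 : ((if a 0 = some y then (1:ℝ) else 0)) ∈ Set.Icc (0:ℝ) 1 := by
      split <;> simp
    have e1 : ((if a 1 = none then (1:ℝ) else 0)) ∈ Set.Icc (0:ℝ) 1 := by
      split <;> simp
    have e2 : ((if a 0 = none then (1:ℝ) else 0)) ∈ Set.Icc (0:ℝ) 1 := by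
      split <;> simp
    have e3 : ((if a 1 = some y then (1:ℝ) else 0)) ∈ Set.Icc (0:ℝ) 1 := by
      split <;> simp
    unfold uP10
    split
    · constructor
      · have := e0.1; have := e1.1; positivity
      · nlinarith [e0.2, e1.2, e0.1, e1.1]
    · constructor
      · have := e2.1; have := e3.1; positivity
      · nlinarith [e2.2, e3.2, e2.1, e3.1]
  · intro i a y
    unfold uU10
    rcases a with _ | x
    · simp; constructor <;> [linarith; linarith]
    · by_cases h : some x = some y <;> simp [h] <;> constructor <;> linarith
  · intro j i a y
    unfold F10; split <;> split <;> norm_num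
  · intro j i; unfold lam10; split <;> assumption
  · intro j i; unfold w10; split <;> linarith
  · intro j a y
    fin_cases j <;>
      simp [uP10, lam10, F10, Fin.sum_univ_two]
  · intro i a y
    fin_cases i <;>
      simp [uU10, w10, F10, Fin.sum_univ_two] <;> ring
  · intro i
    exact ⟨i, by simp [lam10]; positivity, by simp [w10]; linarith⟩
  · intro j i _
    unfold lam10; split
    · positivity
    · positivity
end

section
/- Provider utility cap in the augmented anonymous-game counterexample (core inequality of Theorem 5.2): Let Y be a finite nonempty state type and A = Y ∪ {⊥}. Let π be any probability distribution on A × A × Y (over the two users' actions (a₁, a₂) and the state y) such that the marginal distribution of (a₁, y) under π equals the marginal distribution of (a₂, y) under π. Define the augmented provider utility û(a₁, a₂, y) = (1/4)·1[a₁ = y] + (1/6)·1[a₁ = ⊥] + (1/2)·1[a₂ = ⊥], and set p = Pr_π[a₁ ≠ ⊥]. Then E_π[û] ≤ p/4 + (2/3)·(1−p) = 2/3 − (5/12)·p; in particular E_π[û] ≤ 2/3, with strict inequality whenever p > 0, so the provider's expected utility is uniquely maximized (at value 2/3) by inducing both users to always play ⊥. -/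
open scoped Classical

/-- Probability of the event `E` under a distribution `p` on a finite type. -/
noncomputable def Pr {X : Type*} [Fintype X] (p : X → ℝ) (E : X → Prop) : ℝ :=
  ∑ x, if E x then p x else 0

/-- The augmented provider utility of the counterexample of Theorem 5.2:
`û(a₁, a₂, y) = (1/4)·1[a₁ = y] + (1/6)·1[a₁ = ⊥] + (1/2)·1[a₂ = ⊥]`,
with actions in `Option Y` and `⊥ = none`. -/
noncomputable def uhat12 {Y : Type*} (x : Option Y × Option Y × Y) : ℝ :=
  (1 / 4) * (if x.1 = some x.2.2 then 1 else 0) +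
    (1 / 6) * (if x.1 = none then 1 else 0) +
    (1 / 2) * (if x.2.1 = none then 1 else 0)

/-- Provider utility cap in the augmented anonymous-game counterexample (core
inequality of Theorem 5.2): for any distribution `π` on `(a₁, a₂, y)` whose
`(a₁, y)`- and `(a₂, y)`-marginals coincide, with `p = Pr_π[a₁ ≠ ⊥]`, the expected
augmented provider utility satisfies `E_π[û] ≤ p/4 + (2/3)(1−p) = 2/3 − (5/12)p`;
in particular it is at most `2/3`, strictly so when `p > 0`. -/
theorem augmented_provider_utility_cap
    {Y : Type*} [Fintype Y] [Nonempty Y]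
    (π : Option Y × Option Y × Y → ℝ)
    (hπ0 : ∀ x, 0 ≤ π x) (hπ1 : ∑ x, π x = 1)
    (hmarg : ∀ (a : Option Y) (y : Y), (∑ b, π (a, b, y)) = ∑ b, π (b, a, y)) :
    Ex π uhat12 ≤ Pr π (fun x => x.1 ≠ none) / 4 +
        (2 / 3) * (1 - Pr π (fun x => x.1 ≠ none)) ∧
    Pr π (fun x => x.1 ≠ none) / 4 + (2 / 3) * (1 - Pr π (fun x => x.1 ≠ none)) =
      2 / 3 - (5 / 12) * Pr π (fun x => x.1 ≠ none) ∧
    Ex π uhat12 ≤ 2 / 3 ∧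
    (0 < Pr π (fun x => x.1 ≠ none) → Ex π uhat12 < 2 / 3) := by

  set p := Pr π (fun x => x.1 ≠ none) with hp
  have hp0 : 0 ≤ p := Finset.sum_nonneg fun x _ => by
    split_ifs
    · exact hπ0 x
    · exact le_rfl
  have key : Ex π uhat12 = (1/4) * Pr π (fun x => x.1 = some x.2.2) +
      (1/6) * Pr π (fun x => x.1 = none) + (1/2) * Pr π (fun x => x.2.1 = none) := by
    unfold Ex Pr uhat12
    rw [Finset.mul_sum, Finset.mul_sum, Finset.mul_sum, ← Finset.sum_add_distrib,
      ← Finset.sum_add_distrib]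
    refine Finset.sum_congr rfl fun x _ => ?_
    by_cases h1 : x.1 = some x.2.2 <;> by_cases h2 : x.1 = none <;>
      by_cases h3 : x.2.1 = none <;> simp [h1, h2, h3] <;> ring
  have hQ : Pr π (fun x => x.1 = some x.2.2) ≤ p := by
    refine Finset.sum_le_sum fun x _ => ?_
    by_cases h1 : x.1 = some x.2.2
    · simp [h1]
    · simp only [h1, if_false]
      split_ifs
      · exact hπ0 x
      · exact le_rfl
  have hsplit : Pr π (fun x => x.1 = none) = 1 - p := by
    rw [hp]
    unfold Pr
    rw [← hπ1, ← Finset.sum_sub_distrib]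
    refine Finset.sum_congr rfl fun x _ => ?_
    by_cases h : x.1 = none <;> simp [h]
  have hmarg2 : Pr π (fun x => x.2.1 = none) = Pr π (fun x => x.1 = none) := by
    unfold Pr
    rw [Fintype.sum_prod_type, Fintype.sum_prod_type]
    simp only [Fintype.sum_prod_type]
    have L : ∀ a : Option Y, (∑ b : Option Y, ∑ y : Y, if b = none then π (a, b, y) else 0)
        = ∑ y : Y, π (a, none, y) := by
      intro a
      rw [Finset.sum_comm]
      simp
    have R : ∀ a : Option Y, (∑ b : Option Y, ∑ y : Y, if a = none then π (a, b, y) else 0)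
        = if a = none then ∑ b : Option Y, ∑ y : Y, π (a, b, y) else 0 := by
      intro a
      split_ifs with h <;> simp [h]
    simp [L, R]
    have key2 : ∀ y : Y, (∑ i : Y, π (some i, none, y)) = ∑ b : Y, π (none, some b, y) := by
      intro y
      have h := hmarg none y
      rw [Fintype.sum_option, Fintype.sum_option] at h
      linarith
    calc (∑ i : Y, ∑ x : Y, π (some i, none, x))
        = ∑ x : Y, ∑ i : Y, π (some i, none, x) := Finset.sum_comm
      _ = ∑ x : Y, ∑ b : Y, π (none, some b, x) := Finset.sum_congr rfl fun y _ => key2 y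
      _ = ∑ b : Y, ∑ x : Y, π (none, some b, x) := Finset.sum_comm
  rw [key, hmarg2, hsplit]
  refine ⟨by linarith, by ring, by linarith, fun hpp => by linarith⟩
end
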